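/- arXiv:2211.16302 — 4 statements merged into one kernel-verified Lean document; each statement's English description precedes it below -/
import Mathlib

section
/- For any integer r ≥ 2 and any pseudo-differential operator A of the form A = ∂_x^r + Σ_{n ≥ 1} a_n ∂_x^{r−n} over a commutative differential ℚ-algebra, there exists a unique pseudo-differential operator B of the form B = ∂_x + Σ_{n ≥ 0} b_n ∂_x^{−n} such that B^r = A (r-fold composition). -/
/-! If two operators `∂ₓ + …` first differ in the coefficient of `∂ₓ^{1-m}`, their `s`-th powers
first differ in the coefficient of `∂ₓ^{s-m}`, by exactly `s` times that difference: in the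
composition sum the discrepancy only meets leading coefficients. Since `r` is invertible in the
ℚ-algebra `R`, this gives uniqueness, and it determines the coefficients of the root one at a
time: the coefficient of `∂ₓ^{-m}` is `1/r` times the discrepancy, at `∂ₓ^{r-m-1}`, between `A`
and the `r`-th power of the root truncated below `∂ₓ^{1-m}`. -/

open Finset

/-- The generalized binomial coefficient `k(k−1)⋯(k−l+1)/l!` for `k : ℤ`. -/
def genBinom (k : ℤ) (l : ℕ) : ℚ :=
  (∏ i ∈ Finset.range l, ((k : ℚ) - (i : ℚ))) / (Nat.factorial l : ℚ)

/-- A pseudo-differential operator `Σ_{n ≤ bound} a_n ∂ₓ^n` with coefficients in `R`: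
a family of coefficients `a_n` indexed by `n : ℤ`, vanishing above some bound. -/
structure PDO (R : Type*) [CommRing R] where
  coeff : ℤ → R
  bound : ℤ
  coeff_eq_zero : ∀ n : ℤ, bound < n → coeff n = 0

variable {R : Type*} [CommRing R] [Algebra ℚ R]

/-- The coefficient of `∂ₓ^n` in the composition `A ∘ B`, determined by the generalized
Leibniz rule `∂ₓ^k ∘ f = Σ_{l ≥ 0} (k(k−1)⋯(k−l+1)/l!)(∂^l f) ∂ₓ^{k−l}` together with
bilinearity and continuity: the terms `a_k · (k…(k−l+1)/l!) ∂^l(b_j)` with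
`k − l + j = n` are parametrized by `k = n − B.bound + p` and `l ≤ p`. -/
def pdoCompCoeff (D : Derivation ℚ R R) (A B : PDO R) (n : ℤ) : R :=
  ∑ p ∈ Finset.range (A.bound + B.bound + 1 - n).toNat,
    ∑ l ∈ Finset.range (p + 1),
      A.coeff (n - B.bound + p) *
        (genBinom (n - B.bound + p) l • (⇑D)^[l] (B.coeff (B.bound - p + l)))

/-- Composition of pseudo-differential operators. -/
def pdoComp (D : Derivation ℚ R R) (A B : PDO R) : PDO R where
  coeff := pdoCompCoeff D A B
  bound := A.bound + B.bound
  coeff_eq_zero := by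
    intro n hn
    have h : (A.bound + B.bound + 1 - n).toNat = 0 := by omega
    simp [pdoCompCoeff, h]

/-- The pseudo-differential operator `∂ₓ^k`. -/
def pdoDelta (k : ℤ) : PDO R where
  coeff := fun n => if n = k then 1 else 0
  bound := k
  coeff_eq_zero := by
    intro n hn
    rw [if_neg (by omega)]

/-- The identity pseudo-differential operator `1 = ∂ₓ^0`. -/
def pdoOne : PDO R := pdoDelta 0

/-- Iterated composition power `A^n` of a pseudo-differential operator. -/
def pdoNpow (D : Derivation ℚ R R) (A : PDO R) : ℕ → PDO R
  | 0 => pdoOne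
  | n + 1 => pdoComp D A (pdoNpow D A n)

/-- The differential-operator part `A₊ = Σ_{n ≥ 0} a_n ∂ₓ^n`. -/
def pdoPlus (A : PDO R) : PDO R where
  coeff := fun n => if 0 ≤ n then A.coeff n else 0
  bound := max A.bound 0
  coeff_eq_zero := by
    intro n hn
    by_cases h : 0 ≤ n
    · rw [if_pos h]; exact A.coeff_eq_zero n (by omega)
    · rw [if_neg h]

/-- The purely negative part `A₋ = A − A₊ = Σ_{n ≤ −1} a_n ∂ₓ^n`. -/
def pdoMinus (A : PDO R) : PDO R where
  coeff := fun n => if n < 0 then A.coeff n else 0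
  bound := -1
  coeff_eq_zero := by
    intro n hn
    rw [if_neg (by omega)]

/-- `pdoCompCoeff` with arbitrary upper bounds `a`, `c` of the supports in place of the recorded
ones; it does not depend on that choice (`pdoCompCoeff_eq_compCoeffWith`), so `PDO.bound` never
has to be tracked. -/
def compCoeffWith (D : Derivation ℚ R R) (A C : ℤ → R) (a c n : ℤ) : R :=
  ∑ p ∈ range (a + c + 1 - n).toNat, ∑ l ∈ range (p + 1),
    A (n - c + p) * (genBinom (n - c + p) l • (⇑D)^[l] (C (c - p + l)))

section CompCoeffWith

variable (D : Derivation ℚ R R) {A A' C C' : ℤ → R} {a c n : ℤ}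

lemma compCoeffWith_of_le_left (hA : ∀ k, a < k → A k = 0) {a' : ℤ} (h : a ≤ a') :
    compCoeffWith D A C a' c n = compCoeffWith D A C a c n := by
  refine (sum_subset (range_subset_range.mpr (by omega)) fun p hp hp' => ?_).symm
  rw [mem_range] at hp hp'
  exact sum_eq_zero fun l _ => by rw [hA _ (by omega), zero_mul]

lemma compCoeffWith_succ_right (hC : ∀ k, c < k → C k = 0) :
    compCoeffWith D A C a (c + 1) n = compCoeffWith D A C a c n := by
  unfold compCoeffWith
  rcases le_or_gt n (a + c + 1) with hn | hn
  · rw [show (a + (c + 1) + 1 - n).toNat = (a + c + 1 - n).toNat + 1 by omega, sum_range_succ',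
      sum_range_one]
    simp only [Nat.cast_zero, sub_zero, add_zero, Function.iterate_zero_apply,
      hC _ (lt_add_one c), smul_zero, mul_zero]
    refine sum_congr rfl fun p _ => ?_
    rw [sum_range_succ]
    push_cast
    rw [show c + 1 - (p + 1) + (p + 1) = c + 1 by ring, hC _ (lt_add_one c), iterate_map_zero,
      smul_zero, mul_zero, add_zero]
    refine sum_congr rfl fun l _ => ?_
    rw [show n - (c + 1) + (p + 1) = n - c + p by ring, show c + 1 - (p + 1) = c - p by ring]
  · rw [show (a + (c + 1) + 1 - n).toNat = 0 by omega, show (a + c + 1 - n).toNat = 0 by omega,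
      sum_range_zero, sum_range_zero]

lemma compCoeffWith_of_le_right (hC : ∀ k, c < k → C k = 0) {c' : ℤ} (h : c ≤ c') :
    compCoeffWith D A C a c' n = compCoeffWith D A C a c n := by
  induction c', h using Int.leInduction with
  | base => rfl
  | succ c' h ih => rw [compCoeffWith_succ_right D fun k hk => hC k (by omega), ih]

lemma compCoeffWith_eq_zero (h : a + c < n) : compCoeffWith D A C a c n = 0 := by
  simp [compCoeffWith, show (a + c + 1 - n).toNat = 0 by omega]

lemma compCoeffWith_add : compCoeffWith D A C a c (a + c) = A a * C c := by
  simp [compCoeffWith, genBinom]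

lemma compCoeffWith_sub_compCoeffWith :
    compCoeffWith D A C a c n - compCoeffWith D A' C' a c n =
      compCoeffWith D (A - A') C a c n + compCoeffWith D A' (C - C') a c n := by
  simp only [compCoeffWith, ← sum_sub_distrib, ← sum_add_distrib, Pi.sub_apply, iterate_map_sub,
    smul_sub]
  exact sum_congr rfl fun p _ => sum_congr rfl fun l _ => by ring

end CompCoeffWith

section Composition

variable (D : Derivation ℚ R R) {A A' C C' : PDO R} {a c : ℤ}

lemma pdoCompCoeff_eq_compCoeffWith (hA : ∀ k, a < k → A.coeff k = 0)
    (hC : ∀ k, c < k → C.coeff k = 0) (n : ℤ) :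
    pdoCompCoeff D A C n = compCoeffWith D A.coeff C.coeff a c n :=
  calc compCoeffWith D A.coeff C.coeff A.bound C.bound n
      = compCoeffWith D A.coeff C.coeff (max A.bound a) (max C.bound c) n := by
        rw [compCoeffWith_of_le_left D A.coeff_eq_zero (le_max_left _ _),
          compCoeffWith_of_le_right D C.coeff_eq_zero (le_max_left _ _)]
    _ = compCoeffWith D A.coeff C.coeff a c n := by
        rw [compCoeffWith_of_le_left D hA (le_max_right _ _),
          compCoeffWith_of_le_right D hC (le_max_right _ _)]

lemma pdoCompCoeff_sub_pdoCompCoeff (m : ℕ) (hA : ∀ k, a < k → A.coeff k = 0)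
    (hA' : ∀ k, a < k → A'.coeff k = 0) (hC : ∀ k, c < k → C.coeff k = 0)
    (hC' : ∀ k, c < k → C'.coeff k = 0) (hAA' : ∀ k, a - m < k → A.coeff k = A'.coeff k)
    (hCC' : ∀ k, c - m < k → C.coeff k = C'.coeff k) :
    pdoCompCoeff D A C (a + c - m) - pdoCompCoeff D A' C' (a + c - m) =
      (A.coeff (a - m) - A'.coeff (a - m)) * C.coeff c +
        A'.coeff a * (C.coeff (c - m) - C'.coeff (c - m)) := by
  have hδA : ∀ k, a - m < k → (A.coeff - A'.coeff) k = 0 := fun k hk =>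
    sub_eq_zero.mpr (hAA' k hk)
  have hδC : ∀ k, c - m < k → (C.coeff - C'.coeff) k = 0 := fun k hk =>
    sub_eq_zero.mpr (hCC' k hk)
  rw [pdoCompCoeff_eq_compCoeffWith D hA hC, pdoCompCoeff_eq_compCoeffWith D hA' hC',
    compCoeffWith_sub_compCoeffWith, compCoeffWith_of_le_left D hδA (by omega),
    compCoeffWith_of_le_right D hδC (by omega), show a + c - m = a - m + c by ring,
    compCoeffWith_add, show a - m + c = a + (c - m) by ring, compCoeffWith_add]
  rfl

end Composition

def PDO.IsMonicOrderOne (B : PDO R) : Prop :=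
  B.coeff 1 = 1 ∧ ∀ n : ℤ, 1 < n → B.coeff n = 0

section Powers

variable (D : Derivation ℚ R R) {B B' : PDO R}

lemma pdoNpow_coeff_eq_zero (hB : ∀ k, 1 < k → B.coeff k = 0) (s : ℕ) :
    ∀ k : ℤ, s < k → (pdoNpow D B s).coeff k = 0 := by
  induction s with
  | zero => exact fun k hk => if_neg (by omega)
  | succ s ih =>
    intro k hk
    change pdoCompCoeff D B (pdoNpow D B s) k = 0
    rw [pdoCompCoeff_eq_compCoeffWith D hB ih, compCoeffWith_eq_zero]
    push_cast at hk
    omega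

lemma pdoNpow_coeff_self (hB : B.IsMonicOrderOne) (s : ℕ) : (pdoNpow D B s).coeff s = 1 := by
  induction s with
  | zero => simp [pdoNpow, pdoOne, pdoDelta]
  | succ s ih =>
    change pdoCompCoeff D B (pdoNpow D B s) _ = 1
    rw [pdoCompCoeff_eq_compCoeffWith D hB.2 (pdoNpow_coeff_eq_zero D hB.2 s), Nat.cast_succ,
      add_comm, compCoeffWith_add, hB.1, ih, one_mul]

lemma pdoNpow_coeff_sub_pdoNpow_coeff (hB : B.IsMonicOrderOne) (hB' : B'.IsMonicOrderOne)
    (s : ℕ) : ∀ m : ℕ, (∀ k : ℤ, 1 - m < k → B.coeff k = B'.coeff k) →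
      (pdoNpow D B s).coeff (s - m) - (pdoNpow D B' s).coeff (s - m) =
        (s : ℚ) • (B.coeff (1 - m) - B'.coeff (1 - m)) := by
  induction s with
  | zero => intro m _; simp [pdoNpow, pdoOne, pdoDelta]
  | succ s ih =>
    intro m hBB'
    have hpow : ∀ k, (s : ℤ) - m < k → (pdoNpow D B s).coeff k = (pdoNpow D B' s).coeff k := by
      intro k hk
      rcases lt_or_ge (s : ℤ) k with hsk | hks
      · rw [pdoNpow_coeff_eq_zero D hB.2 s k hsk, pdoNpow_coeff_eq_zero D hB'.2 s k hsk]
      · obtain ⟨j, rfl⟩ : ∃ j : ℕ, k = s - j := ⟨(s - k).toNat, by omega⟩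
        have hj := ih j fun k' hk' => hBB' k' (by omega)
        rwa [hBB' _ (by omega), sub_self, smul_zero, sub_eq_zero] at hj
    have hcomp := pdoCompCoeff_sub_pdoCompCoeff D m hB.2 hB'.2 (pdoNpow_coeff_eq_zero D hB.2 s)
      (pdoNpow_coeff_eq_zero D hB'.2 s) hBB' hpow
    rw [pdoNpow_coeff_self D hB s, hB'.1, ih m hBB'] at hcomp
    change pdoCompCoeff D B (pdoNpow D B s) _ - pdoCompCoeff D B' (pdoNpow D B' s) _ = _
    rw [show ((s + 1 : ℕ) : ℤ) - m = 1 + s - m by push_cast; ring, hcomp]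
    push_cast
    rw [mul_one, one_mul, add_smul, one_smul, add_comm]

theorem coeff_eq_of_pdoNpow_coeff_eq {r : ℕ} (hr : r ≠ 0) (hB : B.IsMonicOrderOne)
    (hB' : B'.IsMonicOrderOne) (h : (pdoNpow D B r).coeff = (pdoNpow D B' r).coeff) :
    B.coeff = B'.coeff := by
  have hagree : ∀ m : ℕ, ∀ k : ℤ, 1 - m < k → B.coeff k = B'.coeff k := by
    intro m
    induction m with
    | zero => intro k hk; rw [hB.2 k (by omega), hB'.2 k (by omega)]
    | succ m ih =>
      intro k hk
      rcases lt_or_eq_of_le (show 1 - (m : ℤ) ≤ k by omega) with hk' | rfl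
      · exact ih k hk'
      · have hδ := pdoNpow_coeff_sub_pdoNpow_coeff D hB hB' r m ih
        rw [h, sub_self, eq_comm, smul_eq_zero, sub_eq_zero] at hδ
        exact hδ.resolve_left (by exact_mod_cast hr)
  funext k
  exact hagree ((1 - k).toNat + 1) k (by omega)

end Powers

/-- `∂ₓ + Σ_{n ≥ 0} b n ∂ₓ^{-n}`. -/
def monicOrderOne (b : ℕ → R) : PDO R where
  coeff k := if k = 1 then 1 else if k ≤ 0 then b (-k).toNat else 0
  bound := 1
  coeff_eq_zero k hk := by rw [if_neg (by omega), if_neg (by omega)]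

omit [Algebra ℚ R] in
lemma monicOrderOne_isMonicOrderOne (b : ℕ → R) : (monicOrderOne b).IsMonicOrderOne :=
  ⟨by simp [monicOrderOne], (monicOrderOne b).coeff_eq_zero⟩

omit [Algebra ℚ R] in
lemma monicOrderOne_coeff_neg (b : ℕ → R) (n : ℕ) : (monicOrderOne b).coeff (-n) = b n := by
  simp only [monicOrderOne]
  rw [if_neg (by omega), if_pos (by omega), neg_neg, Int.toNat_natCast]

/-- The coefficient of `∂ₓ^{-n}` in `A^{1/r}`, solved for from the coefficient of
`∂ₓ^{r-n-1}` in `A` given the previous ones. -/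
noncomputable def rootCoeff (D : Derivation ℚ R R) (r : ℕ) (A : PDO R) (n : ℕ) : R :=
  (r : ℚ)⁻¹ • (A.coeff (r - (n + 1)) -
    (pdoNpow D (monicOrderOne fun i => if i < n then rootCoeff D r A i else 0) r).coeff
      (r - (n + 1)))
termination_by n

noncomputable def pdoRoot (D : Derivation ℚ R R) (r : ℕ) (A : PDO R) : PDO R :=
  monicOrderOne (rootCoeff D r A)

theorem pdoNpow_pdoRoot_coeff (D : Derivation ℚ R R) {r : ℕ} (hr : r ≠ 0) {A : PDO R}
    (hAr : A.coeff r = 1) (hAtop : ∀ n : ℤ, r < n → A.coeff n = 0) :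
    (pdoNpow D (pdoRoot D r A) r).coeff = A.coeff := by
  have hroot : (pdoRoot D r A).IsMonicOrderOne := monicOrderOne_isMonicOrderOne _
  funext n
  rcases lt_trichotomy n r with hn | rfl | hn
  · obtain ⟨m, rfl⟩ : ∃ m : ℕ, n = r - (m + 1) := ⟨(r - n - 1).toNat, by omega⟩
    set Bm := monicOrderOne fun i => if i < m then rootCoeff D r A i else 0
    have hagree : ∀ k : ℤ, 1 - ((m + 1 : ℕ) : ℤ) < k → (pdoRoot D r A).coeff k = Bm.coeff k := by
      intro k hk
      simp only [pdoRoot, Bm, monicOrderOne]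
      split_ifs <;> first | rfl | omega
    have hδ := pdoNpow_coeff_sub_pdoNpow_coeff D hroot (monicOrderOne_isMonicOrderOne _) r
      (m + 1) hagree
    rw [show 1 - ((m + 1 : ℕ) : ℤ) = -m by push_cast; ring, pdoRoot, monicOrderOne_coeff_neg,
      monicOrderOne_coeff_neg, if_neg (lt_irrefl m), sub_zero, rootCoeff,
      smul_inv_smul₀ (by exact_mod_cast hr)] at hδ
    push_cast at hδ
    exact sub_left_injective hδ
  · exact (pdoNpow_coeff_self D hroot r).trans hAr.symm
  · rw [pdoNpow_coeff_eq_zero D hroot.2 r n hn, hAtop n hn]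

/-- For any integer `r ≥ 2` and any pseudo-differential operator
`A = ∂ₓ^r + Σ_{n ≥ 1} a_n ∂ₓ^{r−n}` over a commutative differential ℚ-algebra, there exists
a pseudo-differential operator `B = ∂ₓ + Σ_{n ≥ 0} b_n ∂ₓ^{−n}` with `B^r = A`
(r-fold composition), and it is unique (as a coefficient family) among operators of
this form. -/
theorem pdo_rth_root_exists_unique (D : Derivation ℚ R R) (r : ℕ) (hr : 2 ≤ r)
    (A : PDO R) (hAr : A.coeff (r : ℤ) = 1)
    (hAtop : ∀ n : ℤ, (r : ℤ) < n → A.coeff n = 0) :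
    ∃ B : PDO R,
      (B.coeff 1 = 1 ∧ ∀ n : ℤ, 1 < n → B.coeff n = 0) ∧
      (pdoNpow D B r).coeff = A.coeff ∧
      ∀ B' : PDO R, (B'.coeff 1 = 1 ∧ ∀ n : ℤ, 1 < n → B'.coeff n = 0) →
        (pdoNpow D B' r).coeff = A.coeff → B'.coeff = B.coeff := by
  have hr0 : r ≠ 0 := by omega
  have hroot := pdoNpow_pdoRoot_coeff D hr0 hAr hAtop
  refine ⟨pdoRoot D r A, monicOrderOne_isMonicOrderOne _, hroot, fun B' hB' hB'r => ?_⟩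
  exact coeff_eq_of_pdoNpow_coeff_eq D hr0 hB' (monicOrderOne_isMonicOrderOne _)
    (hB'r.trans hroot.symm)
end

section
/- For any two pseudo-differential operators A and B over a commutative differential ring (R, ∂) containing ℚ, the residue of their commutator is a total derivative: res(A∘B − B∘A) lies in the image of ∂ : R → R. -/
/-!
By the Leibniz rule, `res (A ∘ B) = Σ_{k,l} a_k C(k,l) ∂^l b_{l-1-k}` and `res (B ∘ A)` is the same
sum with `a` and `b` exchanged. Reindexing the latter by `k ↦ l - 1 - k` matches the terms, and
since `C(l - 1 - k, l) = (-1)^l C(k, l)` each matched pair differs by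
`C(k, l) (a ∂^l b - (-1)^l b ∂^l a)`, which is a total derivative by `l`-fold integration by parts.
-/

open Finset

variable {R : Type*} [CommRing R] [Algebra ℚ R]

lemma genBinom_reflect (k : ℤ) (l : ℕ) :
    genBinom ((l : ℤ) - 1 - k) l = (-1) ^ l * genBinom k l := by
  unfold genBinom
  rw [← descPochhammer_eval_eq_prod_range, ← descPochhammer_eval_eq_prod_range,
    descPochhammer_eval_eq_ascPochhammer,
    show (((l : ℤ) - 1 - k : ℤ) : ℚ) - l + 1 = -k by push_cast; ring,
    ascPochhammer_eval_neg_eq_descPochhammer, mul_div_assoc]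

lemma Derivation.mul_iterate_sub_neg_one_pow_zsmul_mem_range {S A : Type*} [CommSemiring S]
    [CommRing A] [Algebra S A] (D : Derivation S A A) (a b : A) (l : ℕ) :
    a * D^[l] b - (-1 : ℤ) ^ l • (b * D^[l] a) ∈ LinearMap.range (D : A →ₗ[S] A) := by
  induction l generalizing b with
  | zero => simp [mul_comm]
  | succ l ih =>
    have hD : (-1 : ℤ) ^ l • (D b * D^[l] a + b * D^[l + 1] a)
        ∈ LinearMap.range (D : A →ₗ[S] A) :=
      ⟨(-1 : ℤ) ^ l • (b * D^[l] a), by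
        rw [Derivation.coeFn_coe, map_zsmul, Derivation.leibniz, Function.iterate_succ_apply',
          smul_eq_mul, smul_eq_mul, add_comm, mul_comm (D^[l] a)]⟩
    convert add_mem (ih (D b)) hD using 1
    rw [Function.iterate_succ_apply, pow_succ]
    simp only [smul_add, mul_neg_one, neg_smul]
    abel

lemma Int.sum_Icc_reflect {M : Type*} [AddCommMonoid M] (f : ℤ → M) (a b c : ℤ) :
    ∑ k ∈ Icc a b, f (c - k) = ∑ k ∈ Icc (c - b) (c - a), f k :=
  sum_nbij' (c - ·) (c - ·) (fun k hk => by simp only [mem_Icc] at hk ⊢; omega)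
    (fun k hk => by simp only [mem_Icc] at hk ⊢; omega) (fun k _ => sub_sub_cancel c k)
    (fun k _ => sub_sub_cancel c k) fun _ _ => rfl

/-- The contribution to `res (A ∘ B)` of the `l`-th Leibniz term of `a_k ∂^k ∘ b_j ∂^j`, where
`j = l - 1 - k` is forced by `k - l + j = -1`. -/
def residueTerm (D : Derivation ℚ R R) (A B : PDO R) (k : ℤ) (l : ℕ) : R :=
  A.coeff k * (genBinom k l • (⇑D)^[l] (B.coeff (l - 1 - k)))

lemma pdoComp_coeff_neg_one (D : Derivation ℚ R R) (A B : PDO R) :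
    (pdoComp D A B).coeff (-1) = ∑ l ∈ range (A.bound + B.bound + 2).toNat,
      ∑ k ∈ Icc ((l : ℤ) - 1 - B.bound) A.bound, residueTerm D A B k l := by
  change pdoCompCoeff D A B (-1) = _
  rw [pdoCompCoeff, show A.bound + B.bound + 1 - -1 = A.bound + B.bound + 2 by ring]
  simp only [range_eq_Ico]
  rw [← sum_Ico_Ico_comm]
  refine sum_congr rfl fun l _ => ?_
  refine sum_nbij' (fun p => -1 - B.bound + p) (fun k => (k + 1 + B.bound).toNat)
    ?_ ?_ ?_ ?_ fun p _ => ?_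
  iterate 4 · intro x hx; simp only [mem_Ico, mem_Icc] at hx ⊢; omega
  rw [residueTerm, show (l : ℤ) - 1 - (-1 - B.bound + p) = B.bound - p + l by ring]

lemma residueTerm_sub_residueTerm_reflect_mem_range (D : Derivation ℚ R R) (A B : PDO R)
    (k : ℤ) (l : ℕ) :
    residueTerm D A B k l - residueTerm D B A (l - 1 - k) l
      ∈ LinearMap.range (D : R →ₗ[ℚ] R) := by
  have hsign : ∀ x : R, (-1 : ℚ) ^ l • x = (-1 : ℤ) ^ l • x := fun x => by
    rw [← Int.cast_smul_eq_zsmul ℚ]; push_cast; rfl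
  convert Submodule.smul_mem _ (genBinom k l)
    (D.mul_iterate_sub_neg_one_pow_zsmul_mem_range (A.coeff k) (B.coeff (l - 1 - k)) l) using 1
  rw [residueTerm, residueTerm, sub_sub_cancel, genBinom_reflect, mul_smul, hsign, smul_sub,
    smul_comm (genBinom k l) ((-1 : ℤ) ^ l)]
  simp only [mul_smul_comm]

/-- For any two pseudo-differential operators `A` and `B` over a
commutative differential ring `(R, ∂)` containing `ℚ`, the residue
`res(A∘B − B∘A)` of their commutator (where `res(Σ a_n ∂ₓ^n) := a_{−1}`) is a total
derivative: it lies in the image of `∂ : R → R`. -/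
theorem res_commutator_is_total_derivative (D : Derivation ℚ R R) (A B : PDO R) :
    ∃ g : R, (pdoComp D A B).coeff (-1) - (pdoComp D B A).coeff (-1) = D g := by
  suffices h : (pdoComp D A B).coeff (-1) - (pdoComp D B A).coeff (-1)
      ∈ LinearMap.range (D : R →ₗ[ℚ] R) by
    obtain ⟨g, hg⟩ := h
    exact ⟨g, hg.symm⟩
  rw [pdoComp_coeff_neg_one, pdoComp_coeff_neg_one, add_comm B.bound, ← sum_sub_distrib]
  refine Submodule.sum_mem _ fun l _ => ?_
  have hreflect : ∑ k ∈ Icc ((l : ℤ) - 1 - A.bound) B.bound, residueTerm D B A k l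
      = ∑ k ∈ Icc ((l : ℤ) - 1 - B.bound) A.bound, residueTerm D B A (l - 1 - k) l := by
    rw [Int.sum_Icc_reflect (residueTerm D B A · l), sub_sub_cancel]
  rw [hreflect, ← sum_sub_distrib]
  exact Submodule.sum_mem _ fun k _ => residueTerm_sub_residueTerm_reflect_mem_range D A B k l
end

section
/- Let O be a first-order linear differential operator on the coefficient ring of pseudo-differential operators satisfying [O, ∂/∂T_1] = ∂/∂T_1, and extend z∂_z + O to symbols by acting on coefficients with O and on powers of z by z∂_z. If pseudo-differential operators A and B satisfy (z∂_z + O)Â = a·Â and (z∂_z + O)B̂ = b·B̂ for integers a, b, then (z∂_z + O) applied to the symbol of A∘B equals (a + b) times the symbol of A∘B. -/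
open Finset

variable {R : Type*} [CommRing R] [Algebra ℚ R]

/-!
Write `∂` for the derivation of the coefficient ring. The Leibniz rule makes the eigenvalues of
`O` add under products, and `[O, ∂] = ∂` makes `∂` raise them by one. The hypotheses say that
`a_k` and `b_j` are eigenvectors of `O` with eigenvalues `a - k` and `b - j`, so every term
`a_k · c · ∂^l b_j` of the coefficient of `∂ₓ^n` in `A ∘ B` (where `k - l + j = n`) is an
eigenvector with eigenvalue `(a - k) + (b - j + l) = a + b - n`; hence so is their sum.
-/

open Module End

section Eigenspace

variable {S M : Type*} [CommRing S] [AddCommGroup M] [Module S M]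

theorem Derivation.mul_mem_eigenspace {A : Type*} [CommRing A] [Algebra S A]
    (D : Derivation S A A) {μ ν : S} {x y : A}
    (hx : x ∈ eigenspace (D : End S A) μ) (hy : y ∈ eigenspace (D : End S A) ν) :
    x * y ∈ eigenspace (D : End S A) (μ + ν) := by
  rw [mem_eigenspace_iff] at hx hy ⊢
  simp only [Derivation.coeFn_coe] at hx hy ⊢
  rw [D.leibniz, hx, hy, smul_eq_mul, smul_eq_mul, mul_smul_comm, mul_smul_comm, mul_comm y,
    add_smul, add_comm]

theorem apply_mem_eigenspace_add_one_of_lie_eq {O D : End S M} (hOD : ⁅O, D⁆ = D) {μ : S}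
    {x : M} (hx : x ∈ eigenspace O μ) : D x ∈ eigenspace O (μ + 1) := by
  rw [mem_eigenspace_iff] at hx ⊢
  have h := LinearMap.congr_fun hOD x
  rw [Ring.lie_def, LinearMap.sub_apply, Module.End.mul_apply, Module.End.mul_apply, hx,
    map_smul, sub_eq_iff_eq_add] at h
  rw [h, add_smul, one_smul, add_comm]

theorem pow_apply_mem_eigenspace_of_lie_eq {O D : End S M} (hOD : ⁅O, D⁆ = D) {μ : S}
    {x : M} (hx : x ∈ eigenspace O μ) (l : ℕ) : (D ^ l) x ∈ eigenspace O (μ + l) := by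
  induction l with
  | zero => simpa using hx
  | succ l ih =>
    rw [pow_succ', Module.End.mul_apply, Nat.cast_succ, ← add_assoc]
    exact apply_mem_eigenspace_add_one_of_lie_eq hOD ih

theorem mem_eigenspace_intCast_sub_iff {O : End S M} {a n : ℤ} {x : M} :
    x ∈ eigenspace O ((a : S) - n) ↔ n • x + O x = a • x := by
  rw [mem_eigenspace_iff, sub_smul, Int.cast_smul_eq_zsmul, Int.cast_smul_eq_zsmul,
    eq_sub_iff_add_eq']

end Eigenspace

/-- Let `O` be a first-order linear differential operator (a ℚ-linear
derivation-like operator satisfying the Leibniz rule) on the coefficient ring, with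
`[O, ∂/∂T_1] = ∂/∂T_1`, where `∂/∂T_1 = D` is the derivation used in the composition of
pseudo-differential operators.  Extend `z∂_z + O` to symbols by letting `O` act on
coefficients and `z∂_z` on powers of `z`, i.e. `((z∂_z + O)Â)ₙ = n·aₙ + O(aₙ)`.
If `(z∂_z + O)Â = a·Â` and `(z∂_z + O)B̂ = b·B̂` for integers `a, b`, then
`(z∂_z + O)` applied to the symbol of `A∘B` equals `(a + b)` times that symbol. -/
theorem symbol_eigen_mul (D : Derivation ℚ R R) (O : R →ₗ[ℚ] R)
    (hLeib : ∀ f g : R, O (f * g) = f * O g + g * O f)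
    (hComm : ∀ f : R, O (D f) = D (O f) + D f)
    (A B : PDO R) (a b : ℤ)
    (hA : ∀ n : ℤ, n • A.coeff n + O (A.coeff n) = a • A.coeff n)
    (hB : ∀ n : ℤ, n • B.coeff n + O (B.coeff n) = b • B.coeff n) :
    ∀ n : ℤ, n • (pdoComp D A B).coeff n + O ((pdoComp D A B).coeff n)
      = (a + b) • (pdoComp D A B).coeff n := by
  intro n
  set O' : Derivation ℚ R R := Derivation.mk' O hLeib
  have hOD : ⁅(O' : End ℚ R), (D : End ℚ R)⁆ = D :=
    LinearMap.ext fun f => by simp [O', Ring.lie_def, hComm]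
  suffices pdoCompCoeff D A B n ∈ eigenspace (O' : End ℚ R) ((a + b : ℤ) - n) from
    mem_eigenspace_intCast_sub_iff.1 this
  refine Submodule.sum_mem _ fun p _ => Submodule.sum_mem _ fun l _ => ?_
  have hAk := mem_eigenspace_intCast_sub_iff.2 (hA (n - B.bound + p))
  have hBj := pow_apply_mem_eigenspace_of_lie_eq hOD
    (mem_eigenspace_intCast_sub_iff.2 (hB (B.bound - p + l))) l
  rw [Module.End.pow_apply, Derivation.coeFn_coe] at hBj
  convert O'.mul_mem_eigenspace hAk (Submodule.smul_mem _ (genBinom (n - B.bound + p) l) hBj)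
    using 2
  push_cast
  ring
end

section
/- Let O be a first-order differential operator on the coefficient ring (a derivation plus scalar operations) with [O, ∂_{T_1}] = ∂_{T_1}. Then for any pseudo-differential operator A and any f in the coefficient ring, O(A_+ f) = A_+(O f) + C f, where C is the differential operator whose symbol is (z∂_z + O) applied to the symbol of A_+. -/
/-! Iterating `[O, ∂] = ∂` gives `[O, ∂ⁿ] = n ∂ⁿ`. Applying the Leibniz rule to each term
`aₙ ∂ⁿ f` of `A₊ f` therefore yields `aₙ ∂ⁿ (O f) + (n aₙ + O aₙ) ∂ⁿ f`, and the second summand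
is the `z∂_z + O` part. -/

open Finset

variable {R : Type*} [CommRing R] [Algebra ℚ R]

/-- The action of the differential-operator part `A₊ = Σ_{0 ≤ n} aₙ ∂ₓ^n` of a
pseudo-differential operator `A` on an element `f` of the coefficient ring, where
`∂ₓ = D`. -/
def pdoPlusAct (D : Derivation ℚ R R) (A : PDO R) (f : R) : R :=
  ∑ n ∈ Finset.range (A.bound.toNat + 1), A.coeff (n : ℤ) * (⇑D)^[n] f

theorem iterate_map_of_commutator_eq {M F : Type*} [AddCommMonoid M] [FunLike F M M]
    [AddMonoidHomClass F M M] (O : M → M) (D : F)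
    (hComm : ∀ x, O (D x) = D (O x) + D x) (n : ℕ) (x : M) :
    O (D^[n] x) = D^[n] (O x) + n • D^[n] x := by
  induction n with
  | zero => simp
  | succ n ih =>
    rw [Function.iterate_succ_apply', hComm, ih, map_add, map_nsmul, Function.iterate_succ_apply',
      succ_nsmul, add_assoc]

theorem map_coeff_mul_iterate {S F : Type*} [CommRing S] [FunLike F S S]
    [AddMonoidHomClass F S S] (O : S → S) (D : F)
    (hLeib : ∀ f g : S, O (f * g) = f * O g + g * O f)
    (hComm : ∀ f : S, O (D f) = D (O f) + D f) (a f : S) (n : ℕ) :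
    O (a * D^[n] f) = a * D^[n] (O f) + ((n : ℤ) • a + O a) * D^[n] f := by
  rw [hLeib, iterate_map_of_commutator_eq O D hComm n f, natCast_zsmul, nsmul_eq_mul, nsmul_eq_mul]
  ring

/-- Let `O` be a first-order linear differential operator (ℚ-linear and
satisfying the Leibniz rule) on the coefficient ring, with `[O, ∂_{T_1}] = ∂_{T_1}`
(`∂_{T_1} = D`).  Then for any pseudo-differential operator `A` and any `f` in the
coefficient ring, `O(A₊ f) = A₊(O f) + C f`, where `C` is the differential operator whose
symbol is `(z∂_z + O)` applied to the symbol of `A₊`, i.e.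
`C = Σ_{n ≥ 0} (n·aₙ + O(aₙ)) ∂ₓ^n`. -/
theorem O_of_plus_action (D : Derivation ℚ R R) (O : R →ₗ[ℚ] R)
    (hLeib : ∀ f g : R, O (f * g) = f * O g + g * O f)
    (hComm : ∀ f : R, O (D f) = D (O f) + D f)
    (A : PDO R) (f : R) :
    O (pdoPlusAct D A f) = pdoPlusAct D A (O f) +
      ∑ n ∈ Finset.range (A.bound.toNat + 1),
        ((n : ℤ) • A.coeff (n : ℤ) + O (A.coeff (n : ℤ))) * (⇑D)^[n] f := by
  unfold pdoPlusAct
  rw [map_sum, ← Finset.sum_add_distrib]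
  exact Finset.sum_congr rfl fun n _ => map_coeff_mul_iterate O D hLeib hComm _ f n
end
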